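/- Let m, d, ℓ be positive integers and let S ⊆ (ℤ/mℤ)^d be a non-mid-point reducible subset. Set n = d·|S|·ℓ and identify (ℤ/mℤ)^n with the product of ℓ·|S| copies of (ℤ/mℤ)^d. Let A be the set of all tuples (w₁, ..., w_{ℓ|S|}) ∈ S^{ℓ|S|} such that each point w ∈ S appears exactly ℓ times among w₁, ..., w_{ℓ|S|}. Then A contains no three-term arithmetic progression in (ℤ/mℤ)^n, i.e., there are no three distinct elements x, y, z ∈ A with x - 2y + z = 0. -/

import Mathlib

/-- A point `y ∈ S` is a non-mid-point of `S` if there is no solution to `2y = x + z`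
with distinct `x, z ∈ S`. -/
def IsNonMidPoint {G : Type*} [AddCommGroup G] (S : Finset G) (y : G) : Prop :=
  ¬ ∃ x ∈ S, ∃ z ∈ S, x ≠ z ∧ 2 • y = x + z

/-- A finite set `S` is non-mid-point reducible if every non-empty subset `S' ⊆ S`
contains a point `y ∈ S'` that is a non-mid-point of `S'`. -/
def NonMidPointReducible {G : Type*} [AddCommGroup G] (S : Finset G) : Prop :=
  ∀ S' ⊆ S, S'.Nonempty → ∃ y ∈ S', IsNonMidPoint S' y

/-!
Let `x, y, z ∈ A` with `x + z = 2 • y` and `x ≠ z`, and let `W ⊆ S` be the set of values of `x`,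
`y`, `z` at the coordinates `I` where `x` and `z` differ. All three tuples have the same multiset
of values, and `2 • x`, `2 • y`, `2 • z` agree off `I`; cancelling, `2 • x`, `2 • y` and `2 • z`
have the same multiset of values on `I`. So every `w ∈ W` satisfies `2 • w = 2 • y i = x i + z i`
for some `i ∈ I`, with `x i ≠ z i` in `W`: no point of `W` is a non-mid-point of `W`.
-/

open Finset

theorem Multiset.map_filter_eq_of_map_eq {α β : Type*} {s : Multiset α} {f g : α → β}
    (p : α → Prop) [DecidablePred p] (h : s.map f = s.map g)
    (hfg : ∀ a ∈ s, ¬ p a → f a = g a) : (s.filter p).map f = (s.filter p).map g := by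
  have hnot : (s.filter fun a => ¬ p a).map f = (s.filter fun a => ¬ p a).map g :=
    map_congr rfl fun a ha => hfg a (mem_filter.1 ha).1 (mem_filter.1 ha).2
  rw [← filter_add_not p s, map_add, map_add, hnot] at h
  exact add_right_cancel h

theorem univ_val_map_eq_nsmul_of_ncard_eq {ι α : Type*} [Fintype ι] [DecidableEq α]
    {S : Finset α} {ℓ : ℕ} {w : ι → α} (hS : ∀ i, w i ∈ S)
    (hc : ∀ s ∈ S, {i | w i = s}.ncard = ℓ) : univ.val.map w = ℓ • S.val := by
  ext s
  rw [Multiset.count_map, Multiset.count_nsmul]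
  by_cases hs : s ∈ S
  · rw [Multiset.count_eq_one_of_mem S.nodup hs, mul_one, ← hc s hs, Set.ncard_eq_toFinset_card',
      Set.toFinset_ofPred]
    simp_rw [eq_comm (a := s)]
    rfl
  · rw [Multiset.count_eq_zero_of_notMem (by simpa using hs), mul_zero, Multiset.card_eq_zero,
      Multiset.filter_eq_nil]
    rintro i - rfl
    exact hs (hS i)

section
variable {ι G : Type*} [Fintype ι] [AddCommGroup G]

theorem exists_two_nsmul_eq_of_map_eq {w y : ι → G} (p : ι → Prop) [DecidablePred p]
    (hw : univ.val.map w = univ.val.map y) (hoff : ∀ i, ¬ p i → 2 • w i = 2 • y i)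
    {i₀ : ι} (hi₀ : p i₀) : ∃ i, p i ∧ 2 • y i = 2 • w i₀ := by
  have hdouble : univ.val.map (2 • w ·) = univ.val.map (2 • y ·) := by
    simpa only [Multiset.map_map, Function.comp_def] using congrArg (Multiset.map (2 • ·)) hw
  have hmem : 2 • w i₀ ∈ (univ.val.filter p).map (2 • y ·) := by
    rw [← Multiset.map_filter_eq_of_map_eq p hdouble fun i _ => hoff i]
    exact Multiset.mem_map_of_mem _ (Multiset.mem_filter.2 ⟨mem_univ_val _, hi₀⟩)
  obtain ⟨i, hi, he⟩ := Multiset.mem_map.1 hmem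
  exact ⟨i, (Multiset.mem_filter.1 hi).2, he⟩

theorem not_nonMidPointReducible_of_threeAP [DecidableEq G] {S : Finset G} {x y z : ι → G}
    (hxS : ∀ i, x i ∈ S) (hyS : ∀ i, y i ∈ S) (hzS : ∀ i, z i ∈ S)
    (hx : univ.val.map x = univ.val.map y) (hz : univ.val.map z = univ.val.map y)
    (hap : ∀ i, x i + z i = 2 • y i) (hxz : x ≠ z) : ¬ NonMidPointReducible S := by
  intro hS
  set I := univ.filter fun i => x i ≠ z i
  set W := I.image x ∪ I.image y ∪ I.image z
  have hI : I.Nonempty := by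
    obtain ⟨i, hi⟩ := Function.ne_iff.1 hxz
    exact ⟨i, mem_filter.2 ⟨mem_univ i, hi⟩⟩
  have hWS : W ⊆ S := by
    simp only [W, union_subset_iff, image_subset_iff]
    exact ⟨⟨fun i _ => hxS i, fun i _ => hyS i⟩, fun i _ => hzS i⟩
  obtain ⟨y₀, hy₀, hnm⟩ := hS W hWS ((hI.image x).mono (subset_union_left.trans subset_union_left))
  obtain ⟨i, hi, hy⟩ : ∃ i, x i ≠ z i ∧ 2 • y i = 2 • y₀ := by
    simp only [W, I, mem_union, mem_image, mem_filter, mem_univ, true_and] at hy₀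
    rcases hy₀ with (⟨i₀, hi₀, rfl⟩ | ⟨i₀, hi₀, rfl⟩) | ⟨i₀, hi₀, rfl⟩
    · exact exists_two_nsmul_eq_of_map_eq _ hx
        (fun i h => by rw [← hap, two_smul, not_not.1 h]) hi₀
    · exact ⟨i₀, hi₀, rfl⟩
    · exact exists_two_nsmul_eq_of_map_eq _ hz
        (fun i h => by rw [← hap, two_smul, not_not.1 h]) hi₀
  have hiI : i ∈ I := mem_filter.2 ⟨mem_univ i, hi⟩
  refine hnm ⟨x i, ?_, z i, ?_, hi, by rw [← hy, hap]⟩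
  · exact mem_union_left _ (mem_union_left _ (mem_image_of_mem x hiI))
  · exact mem_union_right _ (mem_image_of_mem z hiI)

end

theorem stmt16_general (m d ℓ : ℕ)
    (S : Finset (Fin d → ZMod m)) (hSred : NonMidPointReducible S)
    (A : Set (Fin (ℓ * S.card) → (Fin d → ZMod m)))
    (hA : ∀ w, w ∈ A ↔ ((∀ i, w i ∈ S) ∧ ∀ s ∈ S, {i | w i = s}.ncard = ℓ)) :
    ¬ ∃ x ∈ A, ∃ y ∈ A, ∃ z ∈ A,
        x ≠ y ∧ x ≠ z ∧ y ≠ z ∧ x - 2 • y + z = 0 := by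
  rintro ⟨x, hx, y, hy, z, hz, -, hxz, -, hap⟩
  obtain ⟨hxS, hxc⟩ := (hA x).1 hx
  obtain ⟨hyS, hyc⟩ := (hA y).1 hy
  obtain ⟨hzS, hzc⟩ := (hA z).1 hz
  refine not_nonMidPointReducible_of_threeAP hxS hyS hzS ?_ ?_ (fun i => ?_) hxz hSred
  · rw [univ_val_map_eq_nsmul_of_ncard_eq hxS hxc, univ_val_map_eq_nsmul_of_ncard_eq hyS hyc]
  · rw [univ_val_map_eq_nsmul_of_ncard_eq hzS hzc, univ_val_map_eq_nsmul_of_ncard_eq hyS hyc]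
  · have hapi := congrFun hap i
    simp only [Pi.add_apply, Pi.sub_apply, Pi.smul_apply, Pi.zero_apply] at hapi
    rw [← sub_eq_zero, ← hapi]
    abel

/-- Let m, d, ℓ be positive integers and let S ⊆ (ℤ/mℤ)^d be a
non-mid-point reducible subset. Identifying (ℤ/mℤ)^(d·|S|·ℓ) with the product of ℓ·|S|
copies of (ℤ/mℤ)^d, let A be the set of all tuples (w₁, ..., w_{ℓ|S|}) ∈ S^{ℓ|S|} such
that each point w ∈ S appears exactly ℓ times among w₁, ..., w_{ℓ|S|}. Then A contains
no three-term arithmetic progression, i.e., there are no three distinct elements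
x, y, z ∈ A with x - 2y + z = 0. -/
theorem stmt16 (m d ℓ : ℕ) (hm : 0 < m) (hd : 0 < d) (hℓ : 0 < ℓ)
    (S : Finset (Fin d → ZMod m)) (hSred : NonMidPointReducible S)
    (A : Set (Fin (ℓ * S.card) → (Fin d → ZMod m)))
    (hA : ∀ w, w ∈ A ↔ ((∀ i, w i ∈ S) ∧ ∀ s ∈ S, {i | w i = s}.ncard = ℓ)) :
    ¬ ∃ x ∈ A, ∃ y ∈ A, ∃ z ∈ A,
        x ≠ y ∧ x ≠ z ∧ y ≠ z ∧ x - 2 • y + z = 0 :=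
  stmt16_general m d ℓ S hSred A hA
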